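/- Let x > 0 be a real number and let k \ge 1 be an integer. With a_k = \sum_{j=0}^k x^j/j!, b_k = \sum_{j=1}^k j\,x^j/j!, and c_k = \sum_{j=1}^k j^2 x^j/j!, one has a_k c_k - b_k^2 \le a_{k-1} b_k. -/

import Mathlib

/-!
Write `k = m + 1` and `t = x^(m+1)/(m+1)!`. Since `x · d/dx` shifts the exponential partial
sums, `b_{m+1} = x a_m` and `c_{m+1} = x (a_m + b_m)`, while `a_{m+1} = a_m + t`. Eliminating
`x a_m^2` with `x a_m = b_m + (m+1) t` turns `a_k c_k - b_k^2 - a_{k-1} b_k` into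
`x t (b_m - m a_m)`, which is `≤ 0` because every index in `b_m` is at most `m`.
-/

open Filter

/-- `aa k x = ∑_{j=0}^k x^j / j!` -/
noncomputable def aa (k : ℕ) (x : ℝ) : ℝ := ∑ j ∈ Finset.range (k + 1), x ^ j / (Nat.factorial j)

/-- `bb k x = ∑_{j=1}^k j x^j / j!` -/
noncomputable def bb (k : ℕ) (x : ℝ) : ℝ := ∑ j ∈ Finset.Icc 1 k, (j : ℝ) * x ^ j / (Nat.factorial j)

/-- `cc k x = ∑_{j=1}^k j² x^j / j!` -/
noncomputable def cc (k : ℕ) (x : ℝ) : ℝ := ∑ j ∈ Finset.Icc 1 k, (j : ℝ) ^ 2 * x ^ j / (Nat.factorial j)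

noncomputable def r3 (n m : ℕ) (x : ℝ) : ℝ := aa n x + aa m x
noncomputable def r12 (n m : ℕ) (x : ℝ) : ℝ := bb n x * bb m x
noncomputable def r1 (n m : ℕ) (x : ℝ) : ℝ := r3 n m x * cc n x - (bb n x) ^ 2
noncomputable def r2 (n m : ℕ) (x : ℝ) : ℝ := r3 n m x * cc m x - (bb m x) ^ 2

/-- The first-intensity (Kac–Rice) integrand of a Weyl random harmonic polynomial of
bidegree `(n, m)`, evaluated at `z`, with `x = |z|²`. -/
noncomputable def F (n m : ℕ) (z : ℂ) : ℝ :=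
  (1 / ‖z‖ ^ 2) *
    (((r1 n m (‖z‖ ^ 2)) ^ 2 + (r2 n m (‖z‖ ^ 2)) ^ 2 - 2 * (r12 n m (‖z‖ ^ 2)) ^ 2) /
      ((r3 n m (‖z‖ ^ 2)) ^ 2 *
        Real.sqrt ((r1 n m (‖z‖ ^ 2) + r2 n m (‖z‖ ^ 2)) ^ 2 - 4 * (r12 n m (‖z‖ ^ 2)) ^ 2)))

/-- The expected number of zeros in `ℂ`, as given by the Kac–Rice formula. -/
noncomputable def I (n m : ℕ) : ℝ := (1 / Real.pi) * ∫ z : ℂ, F n m z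

lemma aa_succ (m : ℕ) (x : ℝ) :
    aa (m + 1) x = aa m x + x ^ (m + 1) / (m + 1).factorial :=
  Finset.sum_range_succ _ _

lemma bb_succ (m : ℕ) (x : ℝ) :
    bb (m + 1) x = bb m x + (m + 1) * x ^ (m + 1) / (m + 1).factorial := by
  rw [bb, Finset.sum_Icc_succ_top (by omega), Nat.cast_succ, bb]

lemma cc_succ (m : ℕ) (x : ℝ) :
    cc (m + 1) x = cc m x + (m + 1) ^ 2 * x ^ (m + 1) / (m + 1).factorial := by
  rw [cc, Finset.sum_Icc_succ_top (by omega), Nat.cast_succ, cc]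

lemma bb_succ_eq_mul_aa (m : ℕ) (x : ℝ) : bb (m + 1) x = x * aa m x := by
  induction m with
  | zero => simp [bb, aa]
  | succ n ih =>
    rw [bb_succ, ih, aa_succ, Nat.factorial_succ (n + 1)]
    push_cast
    field_simp
    ring

lemma cc_succ_eq_mul_aa_add_bb (m : ℕ) (x : ℝ) : cc (m + 1) x = x * (aa m x + bb m x) := by
  induction m with
  | zero => simp [cc, bb, aa]
  | succ n ih =>
    rw [cc_succ, ih, aa_succ, bb_succ, Nat.factorial_succ (n + 1)]
    push_cast
    field_simp
    ring

lemma bb_eq_sum_range (m : ℕ) (x : ℝ) :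
    bb m x = ∑ j ∈ Finset.range (m + 1), (j : ℝ) * x ^ j / j.factorial := by
  rw [Finset.range_eq_Ico, Finset.sum_eq_sum_Ico_succ_bot (by omega),
    Finset.Ico_add_one_right_eq_Icc, bb]
  simp

lemma bb_le_mul_aa {x : ℝ} (hx : 0 ≤ x) (m : ℕ) : bb m x ≤ m * aa m x := by
  rw [bb_eq_sum_range, aa, Finset.mul_sum]
  refine Finset.sum_le_sum fun j hj => ?_
  have hjm : (j : ℝ) ≤ m := by exact_mod_cast Nat.lt_succ_iff.mp (Finset.mem_range.mp hj)
  rw [mul_div_assoc]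
  exact mul_le_mul_of_nonneg_right hjm (by positivity)

/-- Lemma 3.3: `a_k c_k - b_k² ≤ a_{k-1} b_k` for `k ≥ 1`. -/
theorem weyl_ac_sub_b_sq (x : ℝ) (hx : 0 < x) (k : ℕ) (hk : 1 ≤ k) :
    aa k x * cc k x - (bb k x) ^ 2 ≤ aa (k - 1) x * bb k x := by
  obtain ⟨m, rfl⟩ : ∃ m, k = m + 1 := ⟨k - 1, by omega⟩
  rw [Nat.add_sub_cancel, cc_succ_eq_mul_aa_add_bb, aa_succ, bb_succ_eq_mul_aa]
  set t := x ^ (m + 1) / (m + 1).factorial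
  have hxa : x * aa m x = bb m x + (m + 1) * t := by
    rw [← bb_succ_eq_mul_aa, bb_succ, mul_div_assoc]
  have hgap : (aa m x + t) * (x * (aa m x + bb m x)) - (x * aa m x) ^ 2 - aa m x * (x * aa m x)
      = x * t * (bb m x - m * aa m x) := by
    linear_combination -x * aa m x * hxa
  have hgap_nonpos : x * t * (bb m x - m * aa m x) ≤ 0 :=
    mul_nonpos_of_nonneg_of_nonpos (by positivity) (by linarith [bb_le_mul_aa hx.le m])
  linarith
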